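/- arXiv:0911.2966 — 2 statements merged into one kernel-verified Lean document; each statement's English description precedes it below -/
import Mathlib

section
/- Let G be a finite abelian group and ρ ≥ 2. Then s_ρ(G) = max over proper subgroups H of G of |H| · t_ρ(G/H), where s_ρ(G) is the maximum cardinality of a generating set A of G with diam_A^+(G) ≥ ρ (or 0 if none exists), and t_ρ(G) is the maximum cardinality of an aperiodic ρ-maximal generating set. -/
open Pointwise

variable {G : Type*}

/-- The `n`-fold iterated sumset of a set `A` (with `0` summands giving `{0}`). -/
def iterSum [AddCommGroup G] (A : Set G) : ℕ → Set G
  | 0 => {0}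
  | n + 1 => iterSum A n + A

/-- `A` generates `G` as a group. -/
def Spans [AddCommGroup G] (A : Set G) : Prop := AddSubgroup.closure A = ⊤

/-- The positive diameter of `G` with respect to `A`: the least `n` with
`n·(A ∪ {0}) = G`. -/
noncomputable def diamPlus [AddCommGroup G] (A : Set G) : ℕ :=
  sInf {n : ℕ | iterSum (insert 0 A) n = Set.univ}

/-- The positive length of `g` with respect to `A`. -/
noncomputable def lenPlus [AddCommGroup G] (A : Set G) (g : G) : ℕ :=
  sInf {n : ℕ | g ∈ iterSum (insert 0 A) n}

/-- The absolute positive diameter of `G`. -/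
noncomputable def diamAbs (G : Type*) [AddCommGroup G] : ℕ :=
  sSup {d : ℕ | ∃ A : Set G, Spans A ∧ diamPlus A = d}

/-- `A` is aperiodic: its period (stabilizer) is trivial. -/
def Aperiodic [AddCommGroup G] (A : Set G) : Prop :=
  ∀ g : G, A + {g} = A → g = 0

/-- `A` is `ρ`-maximal: maximal under inclusion subject to `(ρ-1)·(A ∪ {0}) ≠ G`. -/
def RhoMax [AddCommGroup G] (ρ : ℕ) (A : Set G) : Prop :=
  iterSum (insert 0 A) (ρ - 1) ≠ Set.univ ∧
    ∀ B : Set G, A ⊆ B → iterSum (insert 0 B) (ρ - 1) ≠ Set.univ → B = A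

/-- A standard generating set of type `m`. -/
def StandardGen [AddCommGroup G] {r : ℕ} (m : Fin r → ℕ) (e : Fin r → G) : Prop :=
  (∀ i, addOrderOf (e i) = m i) ∧
    ∀ g : G, ∃! lam : Fin r → ℕ, (∀ i, lam i < m i) ∧ g = ∑ i, lam i • e i

noncomputable def tInv (ρ : ℕ) (G : Type*) [AddCommGroup G] : ℕ :=
  sSup {k : ℕ | ∃ A : Set G, Aperiodic A ∧ RhoMax ρ A ∧ Spans A ∧ A.ncard = k}

noncomputable def sInv (ρ : ℕ) (G : Type*) [AddCommGroup G] : ℕ :=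
  sSup {k : ℕ | ∃ A : Set G, Spans A ∧ ρ ≤ diamPlus A ∧ A.ncard = k}

/-!
A generating set `A` with `ρ ≤ diam⁺_A(G)` satisfies `(ρ - 1)·(A ∪ {0}) ≠ G`, so it extends to a
`ρ`-maximal set `B`. Then `B` is a union of cosets of its period `H`, which is proper since
`ρ ≥ 2`, and its image in `G ⧸ H` is an aperiodic `ρ`-maximal generating set with
`|B| = |H| · |B ⧸ H|`. Conversely, the preimage of an aperiodic `ρ`-maximal generating set of
`G ⧸ H` (for `H` proper) generates `G`, has diameter at least `ρ` (the quotient map carries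
`(ρ - 1)`-fold sumsets onto `(ρ - 1)`-fold sumsets), and has `|H|` times as many elements.
-/

open Set

section Sumsets

variable [AddCommGroup G]

lemma iterSum_eq_nsmul (A : Set G) : ∀ n : ℕ, iterSum A n = n • A
  | 0 => by rw [zero_nsmul, ← singleton_zero]; rfl
  | n + 1 => by rw [succ_nsmul, ← iterSum_eq_nsmul A n]; rfl

lemma exists_nsmul_insert_zero_eq_univ [Finite G] {A : Set G} (hA : Spans A) :
    ∃ n : ℕ, n • insert 0 A = univ := by
  have hmem : ∀ g : G, ∃ n : ℕ, g ∈ n • insert 0 A := by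
    intro g
    have hg : g ∈ AddSubmonoid.closure A := by
      rw [← AddSubgroup.closure_toAddSubmonoid_of_finite]
      exact (hA ▸ AddSubgroup.mem_top g : g ∈ AddSubgroup.closure A)
    induction hg using AddSubmonoid.closure_induction with
    | mem x hx => exact ⟨1, by simpa using mem_insert_of_mem 0 hx⟩
    | zero => exact ⟨0, by simp⟩
    | add x y _ _ hx hy =>
      obtain ⟨m, hm⟩ := hx
      obtain ⟨n, hn⟩ := hy
      exact ⟨m + n, by rw [add_nsmul]; exact add_mem_add hm hn⟩
  choose f hf using hmem
  obtain ⟨N, hN⟩ := (finite_range f).bddAbove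
  refine ⟨N, eq_univ_of_forall fun g => ?_⟩
  exact nsmul_subset_nsmul_right (mem_insert 0 A) (hN ⟨g, rfl⟩) (hf g)

lemma nsmul_insert_zero_ne_univ_of_le_diamPlus {A : Set G} {ρ : ℕ} (hρ : ρ ≠ 0)
    (h : ρ ≤ diamPlus A) : (ρ - 1) • insert 0 A ≠ univ := by
  intro huniv
  have : diamPlus A ≤ ρ - 1 := Nat.sInf_le ((iterSum_eq_nsmul _ _).trans huniv)
  omega

lemma le_diamPlus_of_nsmul_insert_zero_ne_univ [Finite G] {A : Set G} (hA : Spans A) {ρ : ℕ}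
    (h : (ρ - 1) • insert 0 A ≠ univ) : ρ ≤ diamPlus A := by
  obtain ⟨n, hn⟩ := exists_nsmul_insert_zero_eq_univ hA
  refine le_csInf ⟨n, (iterSum_eq_nsmul _ _).trans hn⟩ fun m (hm : iterSum _ m = univ) => ?_
  rw [iterSum_eq_nsmul] at hm
  by_contra! hlt
  exact h (eq_univ_of_univ_subset (hm ▸ nsmul_subset_nsmul_right (mem_insert 0 A) (by omega)))

end Sumsets

section Generation

variable [AddCommGroup G] {Q : Type*} [AddCommGroup Q]

lemma Spans.mono {A B : Set G} (hA : Spans A) (hAB : A ⊆ B) : Spans B :=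
  eq_top_iff.2 (hA ▸ AddSubgroup.closure_mono hAB)

lemma Spans.nonempty [Nontrivial G] {A : Set G} (hA : Spans A) : A.Nonempty := by
  rw [nonempty_iff_ne_empty]
  rintro rfl
  exact bot_ne_top (AddSubgroup.closure_empty.symm.trans hA)

lemma Spans.image {f : G →+ Q} (hf : Function.Surjective f) {A : Set G} (hA : Spans A) :
    Spans (f '' A) := by
  rw [Spans, ← AddMonoidHom.map_closure, hA, ← AddMonoidHom.range_eq_map,
    AddMonoidHom.range_eq_top.2 hf]

lemma Spans.preimage {f : G →+ Q} (hf : Function.Surjective f) {S : Set Q} (hS : Spans S)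
    (hne : (f ⁻¹' S).Nonempty) : Spans (f ⁻¹' S) := by
  obtain ⟨a, ha⟩ := hne
  have hker : f.ker ≤ AddSubgroup.closure (f ⁻¹' S) := fun k hk => by
    have hak : a + k ∈ f ⁻¹' S := by
      rwa [mem_preimage, map_add, AddMonoidHom.mem_ker.1 hk, add_zero]
    simpa using sub_mem (AddSubgroup.subset_closure hak) (AddSubgroup.subset_closure ha)
  have hmap : (AddSubgroup.closure (f ⁻¹' S)).map f = ⊤ := by
    rw [AddMonoidHom.map_closure, image_preimage_eq S hf]
    exact hS
  rw [Spans, ← sup_eq_left.2 hker, ← AddSubgroup.comap_map_eq, hmap, AddSubgroup.comap_top]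

end Generation

section Quotient

variable [AddCommGroup G] {H : AddSubgroup G}

lemma image_mk_nsmul_insert_zero (A : Set G) (n : ℕ) :
    ((↑) : G → G ⧸ H) '' (n • insert 0 A) = n • insert 0 (((↑) : G → G ⧸ H) '' A) := by
  rw [← QuotientAddGroup.coe_mk', image_nsmul, image_insert_eq, map_zero]

lemma nsmul_insert_zero_preimage_mk_ne_univ {S : Set (G ⧸ H)} {n : ℕ}
    (h : n • insert 0 S ≠ univ) : n • insert 0 (((↑) : G → G ⧸ H) ⁻¹' S) ≠ univ := by
  intro huniv
  apply h
  rw [← image_preimage_eq S QuotientAddGroup.mk_surjective, ← image_mk_nsmul_insert_zero, huniv,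
    image_univ_of_surjective QuotientAddGroup.mk_surjective]

lemma preimage_image_mk_eq_self {B : Set G} (hB : B + (H : Set G) = B) :
    ((↑) : G → G ⧸ H) ⁻¹' (((↑) : G → G ⧸ H) '' B) = B := by
  rw [QuotientAddGroup.preimage_image_mk_eq_add, hB]

lemma ncard_eq_card_mul_ncard_image_mk {B : Set G} (hB : B + (H : Set G) = B) :
    B.ncard = Nat.card H * (((↑) : G → G ⧸ H) '' B).ncard := by
  rw [← Nat.card_coe_set_eq, ← Nat.card_coe_set_eq,
    ← AddSubgroup.card_add_eq_card_addSubgroup_add_card_quotient, hB]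

lemma ncard_preimage_mk (S : Set (G ⧸ H)) :
    (((↑) : G → G ⧸ H) ⁻¹' S).ncard = Nat.card H * S.ncard := by
  have hper : ((↑) : G → G ⧸ H) ⁻¹' S + (H : Set G) = (↑) ⁻¹' S := by
    rw [← QuotientAddGroup.preimage_image_mk_eq_add,
      image_preimage_eq S QuotientAddGroup.mk_surjective]
  rw [ncard_eq_card_mul_ncard_image_mk hper, image_preimage_eq S QuotientAddGroup.mk_surjective]

end Quotient

section Maximal

variable [AddCommGroup G] {ρ : ℕ}

lemma rhoMax_iff {B : Set G} : RhoMax ρ B ↔ (ρ - 1) • insert 0 B ≠ univ ∧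
    ∀ C : Set G, B ⊆ C → (ρ - 1) • insert 0 C ≠ univ → C = B := by
  simp only [RhoMax, iterSum_eq_nsmul]

lemma exists_rhoMax_superset [Finite G] {A : Set G} (hA : (ρ - 1) • insert 0 A ≠ univ) :
    ∃ B, A ⊆ B ∧ RhoMax ρ B := by
  obtain ⟨B, ⟨hAB, hB⟩, hBmax⟩ := Finite.exists_maximalFor id
    {C : Set G | A ⊆ C ∧ (ρ - 1) • insert 0 C ≠ univ} (toFinite _) ⟨A, subset_rfl, hA⟩
  exact ⟨B, hAB, rhoMax_iff.2
    ⟨hB, fun C hBC hC => le_antisymm (hBmax ⟨hAB.trans hBC, hC⟩ hBC) hBC⟩⟩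

lemma RhoMax.zero_mem {B : Set G} (hB : RhoMax ρ B) : (0 : G) ∈ B := by
  rw [rhoMax_iff] at hB
  rw [← hB.2 (insert 0 B) (subset_insert 0 B) (by rw [insert_idem]; exact hB.1)]
  exact mem_insert 0 B

lemma RhoMax.stabilizer_ne_top (hρ : 2 ≤ ρ) {B : Set G} (hB : RhoMax ρ B) :
    AddAction.stabilizer G B ≠ ⊤ := by
  intro htop
  have hBuniv : B = univ := by
    rw [← AddAction.add_stabilizer_self B, htop, AddSubgroup.coe_top, add_univ ⟨0, hB.zero_mem⟩]
  apply (rhoMax_iff.1 hB).1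
  rw [insert_eq_of_mem hB.zero_mem, hBuniv]
  exact eq_univ_of_univ_subset (subset_nsmul (mem_univ 0) (by omega))

lemma RhoMax.image_mk (hρ : 2 ≤ ρ) {H : AddSubgroup G} {B : Set G} (hB : RhoMax ρ B)
    (hH : B + (H : Set G) = B) : RhoMax ρ (((↑) : G → G ⧸ H) '' B) := by
  have hB0 := hB.zero_mem
  rw [rhoMax_iff] at hB ⊢
  refine ⟨fun huniv => hB.1 ?_, fun C hBC hC => ?_⟩
  · -- `(ρ - 1) • B` is again a union of `H`-cosets, hence the full preimage of its image
    have hper : (ρ - 1) • B + (H : Set G) = (ρ - 1) • B := by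
      obtain ⟨m, hm⟩ : ∃ m, ρ - 1 = m + 1 := ⟨ρ - 2, by omega⟩
      rw [hm, succ_nsmul, add_assoc, hH]
    have himage : ((↑) : G → G ⧸ H) '' ((ρ - 1) • B) = univ := by
      rw [← insert_eq_of_mem hB0, image_mk_nsmul_insert_zero]
      exact huniv
    rw [insert_eq_of_mem hB0, ← preimage_image_mk_eq_self hper, himage, preimage_univ]
  · have hpre : ((↑) : G → G ⧸ H) ⁻¹' C = B := by
      refine hB.2 _ ?_ (nsmul_insert_zero_preimage_mk_ne_univ hC)
      rw [← preimage_image_mk_eq_self hH]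
      exact preimage_mono hBC
    rw [← hpre, image_preimage_eq C QuotientAddGroup.mk_surjective]

lemma aperiodic_iff_stabilizer_eq_bot {A : Set G} :
    Aperiodic A ↔ AddAction.stabilizer G A = ⊥ := by
  have hvadd : ∀ g : G, A + {g} = g +ᵥ A := fun g => by
    rw [add_singleton, ← image_vadd]
    simp only [vadd_eq_add, add_comm]
  simp only [Aperiodic, AddSubgroup.eq_bot_iff_forall, AddAction.mem_stabilizer_iff, hvadd]

end Maximal

section Invariants

variable [AddCommGroup G] [Finite G] {ρ : ℕ}

lemma bddAbove_tInv_set :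
    BddAbove {k : ℕ | ∃ A : Set G, Aperiodic A ∧ RhoMax ρ A ∧ Spans A ∧ A.ncard = k} :=
  ⟨Nat.card G, by rintro _ ⟨A, -, -, -, rfl⟩; exact ncard_le_card A⟩

lemma ncard_le_tInv {A : Set G} (hap : Aperiodic A) (hmax : RhoMax ρ A) (hA : Spans A) :
    A.ncard ≤ tInv ρ G :=
  le_csSup bddAbove_tInv_set ⟨A, hap, hmax, hA, rfl⟩

lemma exists_ncard_eq_tInv (h : tInv ρ G ≠ 0) :
    ∃ A : Set G, Aperiodic A ∧ RhoMax ρ A ∧ Spans A ∧ A.ncard = tInv ρ G :=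
  Nat.sSup_mem (nonempty_iff_ne_empty.2 fun hempty => h (by rw [tInv, hempty, csSup_empty]; rfl))
    bddAbove_tInv_set

lemma ncard_le_sInv {A : Set G} (hA : Spans A) (hd : ρ ≤ diamPlus A) : A.ncard ≤ sInv ρ G :=
  le_csSup ⟨Nat.card G, by rintro _ ⟨B, -, -, rfl⟩; exact ncard_le_card B⟩ ⟨A, hA, hd, rfl⟩

lemma exists_ncard_le_card_mul_tInv (hρ : 2 ≤ ρ) {A : Set G} (hA : Spans A)
    (hd : ρ ≤ diamPlus A) :
    ∃ H : AddSubgroup G, H ≠ ⊤ ∧ A.ncard ≤ Nat.card H * tInv ρ (G ⧸ H) := by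
  obtain ⟨B, hAB, hB⟩ :=
    exists_rhoMax_superset (nsmul_insert_zero_ne_univ_of_le_diamPlus (by omega) hd)
  have hper := AddAction.add_stabilizer_self B
  refine ⟨AddAction.stabilizer G B, hB.stabilizer_ne_top hρ, ?_⟩
  have hap := aperiodic_iff_stabilizer_eq_bot.2 (AddAction.stabilizer_image_coe_quotient B)
  have hspan := (hA.mono hAB).image (QuotientAddGroup.mk'_surjective (AddAction.stabilizer G B))
  calc A.ncard ≤ B.ncard := ncard_le_ncard hAB
    _ = _ := ncard_eq_card_mul_ncard_image_mk hper
    _ ≤ _ := Nat.mul_le_mul_left _ (ncard_le_tInv hap (hB.image_mk hρ hper) hspan)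

lemma card_mul_tInv_quotient_le_sInv {H : AddSubgroup G} (hH : H ≠ ⊤) :
    Nat.card H * tInv ρ (G ⧸ H) ≤ sInv ρ G := by
  by_cases ht : tInv ρ (G ⧸ H) = 0
  · simp [ht]
  obtain ⟨S, -, hmax, hS, hcard⟩ := exists_ncard_eq_tInv ht
  have : Nontrivial (G ⧸ H) := QuotientAddGroup.nontrivial_iff.2 hH
  have hspan : Spans (((↑) : G → G ⧸ H) ⁻¹' S) :=
    hS.preimage (QuotientAddGroup.mk'_surjective H)
      (hS.nonempty.preimage QuotientAddGroup.mk_surjective)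
  have hd : ρ ≤ diamPlus (((↑) : G → G ⧸ H) ⁻¹' S) :=
    le_diamPlus_of_nsmul_insert_zero_ne_univ hspan
      (nsmul_insert_zero_preimage_mk_ne_univ (rhoMax_iff.1 hmax).1)
  rw [← hcard, ← ncard_preimage_mk]
  exact ncard_le_sInv hspan hd

end Invariants

theorem stmt5 (G : Type*) [AddCommGroup G] [Finite G] (ρ : ℕ) (hρ : 2 ≤ ρ) :
    sInv ρ G =
      sSup {k : ℕ | ∃ H : AddSubgroup G, H ≠ ⊤ ∧ k = Nat.card H * tInv ρ (G ⧸ H)} := by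
  have hbdd : BddAbove {k : ℕ | ∃ H : AddSubgroup G, H ≠ ⊤ ∧ k = Nat.card H * tInv ρ (G ⧸ H)} :=
    ⟨sInv ρ G, by rintro _ ⟨H, hH, rfl⟩; exact card_mul_tInv_quotient_le_sInv hH⟩
  refine le_antisymm (csSup_le' ?_) (csSup_le' ?_)
  · rintro _ ⟨A, hA, hd, rfl⟩
    obtain ⟨H, hH, hle⟩ := exists_ncard_le_card_mul_tInv hρ hA hd
    exact hle.trans (le_csSup hbdd ⟨H, hH, rfl⟩)
  · rintro _ ⟨H, hH, rfl⟩
    exact card_mul_tInv_quotient_le_sInv hH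
end

section
/- Let G be a finite abelian group and ρ ≥ 4. If A generates G and the (ρ-1)-fold sumset of A ∪ {0} is not all of G (i.e. diam_A^+(G) ≥ ρ), then |A| ≤ (2/(ρ+1))|G|. Moreover, |A| = (2/(ρ+1))|G| holds if and only if A = H ∪ (g + H) for some subgroup H ≤ G with G/H cyclic of order ρ+1 and g + H a generator of G/H. -/
/-!
Instead of Kneser's theorem we use Hamidoune's isoperimetric method. For `T = A ∪ {0}` let `κ` be
the least value of `|Y + T| - |Y|` over nonempty `Y` with `Y + T ≠ G`. A minimal-size `Y` attaining
`κ` (an atom) can be translated to contain `0`, and then it is a subgroup `H`, because two atoms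
that meet coincide. Since `T` generates `G`, `H + T` contains `H` and a second coset `g + H`, so
`|H| ≤ κ` and `|T| ≤ |H + T| = |H| + κ ≤ 2κ`.

If `(ρ-1)·T ≠ G`, then each passage from `i·T` to `(i+1)·T` with `i < ρ - 2` gains at least `κ`
elements, so `|(ρ-2)·T| ≥ |T| + (ρ-3)κ`, while `(ρ-2)·T` misses a translate `w - T` of `-T`. Hence
`|G| ≥ 2|T| + (ρ-3)κ ≥ (ρ+1)|T|/2`. For `ρ ≥ 4` equality forces `|T| = 2κ`, hence
`T = H + T = H ∪ (g + H)` and `A = T`; conversely the image of `n·A` in the cyclic group `G/H`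
lies in `{0, ḡ, …, nḡ}`, which is proper for `n = ρ - 1`.
-/

open Pointwise

variable {G : Type*}

open Set

section IterSum

variable {G' : Type*} [AddCommGroup G] [AddCommGroup G'] {T : Set G}

theorem iterSum_one (T : Set G) : iterSum T 1 = T := by
  rw [iterSum, iterSum, singleton_zero, zero_add]

theorem zero_mem_iterSum (h0 : (0 : G) ∈ T) : ∀ n, (0 : G) ∈ iterSum T n
  | 0 => rfl
  | n + 1 => ⟨0, zero_mem_iterSum h0 n, 0, h0, add_zero 0⟩

theorem iterSum_mono (h0 : (0 : G) ∈ T) : Monotone (iterSum T) :=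
  monotone_nat_of_le_succ fun n => subset_add_left (iterSum T n) h0

theorem ne_univ_of_iterSum_ne_univ (h0 : (0 : G) ∈ T) {n : ℕ} (hn : n ≠ 0)
    (hne : iterSum T n ≠ univ) : T ≠ univ := by
  have := iterSum_mono h0 (Nat.one_le_iff_ne_zero.2 hn)
  rw [iterSum_one] at this
  exact fun h => hne (univ_subset_iff.1 (h ▸ this))

theorem image_iterSum (f : G →+ G') (A : Set G) :
    ∀ n, f '' iterSum A n = iterSum (f '' A) n
  | 0 => by simp [iterSum]
  | n + 1 => by rw [iterSum, iterSum, image_add, image_iterSum f A n]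

theorem iterSum_pair_subset (x : G) : ∀ n, iterSum {0, x} n ⊆ (· • x) '' Iic n
  | 0 => by simp [iterSum]
  | n + 1 => by
    rintro _ ⟨y, hy, a, ha, rfl⟩
    obtain ⟨i, hi, rfl⟩ := iterSum_pair_subset x n hy
    rcases ha with ha | ha <;> subst a
    · exact ⟨i, Nat.le_succ_of_le hi, (add_zero _).symm⟩
    · exact ⟨i + 1, Nat.succ_le_succ hi, succ_nsmul x i⟩

theorem ncard_iterSum_pair_le (x : G) (n : ℕ) : (iterSum {0, x} n).ncard ≤ n + 1 :=
  calc (iterSum {0, x} n).ncard ≤ ((· • x) '' Iic n).ncard :=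
        ncard_le_ncard (iterSum_pair_subset x n) ((finite_Iic n).image _)
    _ ≤ (Iic n).ncard := ncard_image_le (finite_Iic n)
    _ = n + 1 := ncard_Iic_nat n

end IterSum

section Cosets

variable [AddCommGroup G] (H : AddSubgroup G) (g : G)

theorem union_singleton_add_eq_preimage :
    (H : Set G) ∪ ({g} + H) = ((↑) : G → G ⧸ H) ⁻¹' {0, (g : G ⧸ H)} := by
  ext x
  simp [singleton_add, QuotientAddGroup.eq_zero_iff, eq_comm (a := (x : G ⧸ H)) (b := g),
    QuotientAddGroup.eq]

theorem ncard_union_singleton_add (hg : g ∉ H) :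
    ((H : Set G) ∪ ({g} + H)).ncard = 2 * Nat.card H := by
  rw [union_singleton_add_eq_preimage, ← Nat.card_coe_set_eq,
    Nat.card_congr (QuotientAddGroup.preimageMkEquivAddSubgroupProdSet H _), Nat.card_prod,
    Nat.card_coe_set_eq, ncard_pair, mul_comm]
  exact fun h => hg ((QuotientAddGroup.eq_zero_iff g).1 h.symm)

theorem image_union_singleton_add :
    QuotientAddGroup.mk' H '' ((H : Set G) ∪ ({g} + H)) = {0, (g : G ⧸ H)} := by
  rw [union_singleton_add_eq_preimage]
  exact image_preimage_eq _ (QuotientAddGroup.mk'_surjective H)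

theorem spans_union_singleton_add_iff :
    Spans ((H : Set G) ∪ ({g} + H)) ↔ AddSubgroup.closure {(g : G ⧸ H)} = ⊤ := by
  have hker : (QuotientAddGroup.mk' H).ker ≤ AddSubgroup.closure ((H : Set G) ∪ ({g} + H)) := by
    rw [QuotientAddGroup.ker_mk']
    exact fun x hx => AddSubgroup.subset_closure (Or.inl hx)
  rw [Spans, ← AddSubgroup.closure_insert_zero {(g : G ⧸ H)}, ← image_union_singleton_add,
    ← AddMonoidHom.map_closure]
  constructor
  · intro h
    rw [h, AddSubgroup.map_top_of_surjective _ (QuotientAddGroup.mk'_surjective H)]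
  · intro h
    rw [← AddSubgroup.comap_map_eq_self hker, h, AddSubgroup.comap_top]

theorem iterSum_union_singleton_add_ne_univ {n : ℕ} (hn : n + 1 < Nat.card (G ⧸ H)) :
    iterSum ((H : Set G) ∪ ({g} + H)) n ≠ univ := by
  intro h
  have himage := congrArg (image (QuotientAddGroup.mk' H)) h
  rw [image_iterSum, image_univ_of_surjective (QuotientAddGroup.mk'_surjective H),
    image_union_singleton_add] at himage
  have := ncard_iterSum_pair_le (g : G ⧸ H) n
  rw [himage, ncard_univ] at this
  omega

theorem notMem_of_closure_singleton_eq_top (hgen : AddSubgroup.closure {(g : G ⧸ H)} = ⊤)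
    (hcard : Nat.card (G ⧸ H) ≠ 1) : g ∉ H := by
  intro hg
  rw [(QuotientAddGroup.eq_zero_iff g).2 hg, AddSubgroup.closure_singleton_zero] at hgen
  exact hcard (by rw [← AddSubgroup.card_top, ← hgen, AddSubgroup.card_bot])

theorem mul_ncard_union_singleton_add_eq_iff [Finite G] (hg : g ∉ H) (m : ℕ) :
    m * ((H : Set G) ∪ ({g} + H)).ncard = 2 * Nat.card G ↔ Nat.card (G ⧸ H) = m := by
  rw [ncard_union_singleton_add H g hg, AddSubgroup.card_eq_card_quotient_mul_card_addSubgroup H,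
    mul_left_comm, Nat.mul_left_cancel_iff two_pos, Nat.mul_right_cancel_iff Nat.card_pos, eq_comm]

end Cosets

theorem ncard_add_ncard_le_of_add_ne_univ [AddCommGroup G] [Finite G] {X Y : Set G}
    (h : X + Y ≠ univ) : X.ncard + Y.ncard ≤ Nat.card G := by
  obtain ⟨w, hw⟩ := (ne_univ_iff_exists_notMem _).1 h
  have hmaps : (w - ·) '' Y ⊆ Xᶜ := by
    rintro _ ⟨y, hy, rfl⟩ hx
    exact hw ⟨_, hx, y, hy, sub_add_cancel w y⟩
  have hY := ncard_le_ncard hmaps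
  rw [ncard_image_of_injective _ sub_right_injective] at hY
  have hX := ncard_add_ncard_compl X
  omega

namespace Isoperimetric

variable [AddCommGroup G] {T Y Z F : Set G}

noncomputable def connectivity (T : Set G) : ℕ :=
  sInf {k | ∃ Y : Set G, Y.Nonempty ∧ Y + T ≠ univ ∧ (Y + T).ncard = Y.ncard + k}

def IsFragment (T F : Set G) : Prop :=
  F.Nonempty ∧ F + T ≠ univ ∧ (F + T).ncard = F.ncard + connectivity T

def IsAtom (T F : Set G) : Prop :=
  IsFragment T F ∧ ∀ F', IsFragment T F' → F.ncard ≤ F'.ncard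

theorem IsFragment.vadd (hF : IsFragment T F) (c : G) : IsFragment T (c +ᵥ F) := by
  obtain ⟨hne, hFT, hcard⟩ := hF
  refine ⟨hne.vadd_set, ?_, ?_⟩
  · rwa [vadd_add_assoc, Ne, vadd_set_eq_univ]
  · rwa [vadd_add_assoc, ncard_vadd_set, ncard_vadd_set]

theorem IsAtom.vadd (hF : IsAtom T F) (c : G) : IsAtom T (c +ᵥ F) :=
  ⟨hF.1.vadd c, by simpa only [ncard_vadd_set] using hF.2⟩

variable [Finite G]

theorem ncard_le_ncard_add (h0 : (0 : G) ∈ T) (Y : Set G) : Y.ncard ≤ (Y + T).ncard :=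
  ncard_le_ncard (subset_add_left Y h0)

theorem ncard_add_connectivity_le (h0 : (0 : G) ∈ T) (hY : Y.Nonempty) (hYT : Y + T ≠ univ) :
    Y.ncard + connectivity T ≤ (Y + T).ncard := by
  have hY' := ncard_le_ncard_add h0 Y
  have : connectivity T ≤ (Y + T).ncard - Y.ncard := Nat.sInf_le ⟨Y, hY, hYT, by omega⟩
  omega

theorem exists_isFragment (h0 : (0 : G) ∈ T) (hT : T ≠ univ) : ∃ F, IsFragment T F := by
  obtain ⟨F, hF⟩ : connectivity T ∈
      {k | ∃ Y : Set G, Y.Nonempty ∧ Y + T ≠ univ ∧ (Y + T).ncard = Y.ncard + k} :=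
    Nat.sInf_mem ⟨_, {0}, singleton_nonempty 0, by rwa [singleton_zero, zero_add],
      (Nat.add_sub_cancel' (ncard_le_ncard_add h0 _)).symm⟩
  exact ⟨F, hF⟩

theorem exists_isAtom (h0 : (0 : G) ∈ T) (hT : T ≠ univ) : ∃ F, IsAtom T F := by
  classical
  have hex : ∃ n, ∃ F, IsFragment T F ∧ F.ncard = n :=
    let ⟨F, hF⟩ := exists_isFragment h0 hT; ⟨_, F, hF, rfl⟩
  obtain ⟨F, hF, hFn⟩ := Nat.find_spec hex
  exact ⟨F, hF, fun F' hF' => hFn ▸ Nat.find_min' hex ⟨F', hF', rfl⟩⟩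

theorem IsFragment.neg_compl (h0 : (0 : G) ∈ T) (hF : IsFragment T F) :
    IsFragment T (-(F + T)ᶜ) := by
  obtain ⟨hne, hFT, hcard⟩ := hF
  set F' := -(F + T)ᶜ
  have hF' : F'.ncard + (F + T).ncard = Nat.card G := by
    rw [ncard_neg, add_comm, ncard_add_ncard_compl]
  have hF'ne : F'.Nonempty := by
    obtain ⟨u, hu⟩ := nonempty_compl.2 hFT
    exact ⟨-u, by rwa [mem_neg, neg_neg]⟩
  have hdisj : F + (F' + T) ≠ univ := by
    refine (ne_univ_iff_exists_notMem _).2 ⟨0, ?_⟩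
    rintro ⟨f, hf, _, ⟨y, hy, t, ht, rfl⟩, hsum : f + (y + t) = 0⟩
    exact hy ⟨f, hf, t, ht, eq_neg_of_add_eq_zero_left (by rwa [add_assoc, add_comm t])⟩
  have hF'T : F' + T ≠ univ := by
    rintro h
    rw [h, add_univ hne] at hdisj
    exact hdisj rfl
  have hupper := ncard_add_ncard_le_of_add_ne_univ hdisj
  have hlower := ncard_add_connectivity_le h0 hF'ne hF'T
  exact ⟨hF'ne, hF'T, by omega⟩

theorem IsAtom.ncard_add_ncard_add_le (h0 : (0 : G) ∈ T) (hY : IsAtom T Y)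
    (hF : IsFragment T F) : Y.ncard + (F + T).ncard ≤ Nat.card G := by
  have hmin := hY.2 _ (hF.neg_compl h0)
  rw [ncard_neg] at hmin
  have := ncard_add_ncard_compl (F + T)
  omega

theorem IsFragment.inter (h0 : (0 : G) ∈ T) (hY : IsFragment T Y) (hZ : IsFragment T Z)
    (hYZ : (Y ∩ Z).Nonempty) (hU : (Y ∪ Z) + T ≠ univ) : IsFragment T (Y ∩ Z) := by
  have hI : (Y ∩ Z) + T ⊆ (Y + T) ∩ (Z + T) := inter_add_subset
  have hIT : (Y ∩ Z) + T ≠ univ := fun h =>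
    hY.2.1 (univ_subset_iff.1 (h ▸ hI.trans inter_subset_left))
  have hIκ := ncard_add_connectivity_le h0 hYZ hIT
  have hUκ := ncard_add_connectivity_le h0 (hY.1.mono subset_union_left) hU
  rw [union_add] at hUκ
  have hIle := ncard_le_ncard hI
  have hYZcard := ncard_inter_add_ncard_union Y Z
  have hYZTcard := ncard_inter_add_ncard_union (Y + T) (Z + T)
  have hYT := hY.2.2
  have hZT := hZ.2.2
  exact ⟨hYZ, hIT, by omega⟩

theorem IsAtom.eq_of_inter_nonempty (h0 : (0 : G) ∈ T) (hY : IsAtom T Y) (hZ : IsAtom T Z)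
    (hYZ : (Y ∩ Z).Nonempty) : Y = Z := by
  have hYZc : Y.ncard = Z.ncard := le_antisymm (hY.2 _ hZ.1) (hZ.2 _ hY.1)
  by_cases hU : (Y ∪ Z) + T = univ
  · exfalso
    have hI : (Y ∩ Z) + T ⊆ (Y + T) ∩ (Z + T) := inter_add_subset
    have hIT : (Y ∩ Z) + T ≠ univ := fun h =>
      hY.1.2.1 (univ_subset_iff.1 (h ▸ hI.trans inter_subset_left))
    have hIκ := ncard_add_connectivity_le h0 hYZ hIT
    have hIle := ncard_le_ncard hI
    have hYZTcard := ncard_inter_add_ncard_union (Y + T) (Z + T)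
    rw [← union_add, hU, ncard_univ] at hYZTcard
    have hdual := hY.ncard_add_ncard_add_le h0 hZ.1
    have hYT := hY.1.2.2
    have hZT := hZ.1.2.2
    have hIpos := (ncard_pos (toFinite _)).2 hYZ
    omega
  · have hI := hY.2 _ (hY.1.inter h0 hZ.1 hYZ hU)
    rw [← eq_of_subset_of_ncard_le inter_subset_left hI,
      eq_of_subset_of_ncard_le inter_subset_right (hYZc ▸ hI)]

-- An atom through `0` is its own stabilizer: its translates by its elements are atoms meeting it.
theorem exists_addSubgroup_isAtom (h0 : (0 : G) ∈ T) (hT : T ≠ univ) :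
    ∃ H : AddSubgroup G, IsAtom T H := by
  obtain ⟨Z, hZ⟩ := exists_isAtom h0 hT
  obtain ⟨z, hz⟩ := hZ.1.1
  set Y := -z +ᵥ Z
  have hY : IsAtom T Y := hZ.vadd (-z)
  have hY0 : (0 : G) ∈ Y := ⟨z, hz, neg_add_cancel z⟩
  refine ⟨AddAction.stabilizer G Y, ?_⟩
  convert hY
  ext c
  rw [SetLike.mem_coe, AddAction.mem_stabilizer_iff]
  refine ⟨fun hc => ?_, fun hc => (hY.vadd c).eq_of_inter_nonempty h0 hY ?_⟩
  · rw [← hc]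
    exact ⟨0, hY0, add_zero c⟩
  · exact ⟨c, ⟨0, hY0, add_zero c⟩, hc⟩

theorem ncard_add_mul_connectivity_le_ncard_iterSum (h0 : (0 : G) ∈ T) :
    ∀ {n : ℕ}, iterSum T (n + 1) ≠ univ →
      T.ncard + n * connectivity T ≤ (iterSum T (n + 1)).ncard
  | 0, _ => by rw [iterSum_one, zero_mul, add_zero]
  | n + 1, hne => by
    have ih := ncard_add_mul_connectivity_le_ncard_iterSum h0 fun h =>
      hne (univ_subset_iff.1 (h ▸ iterSum_mono h0 (Nat.le_succ _)))
    have hstep := ncard_add_connectivity_le h0 ⟨0, zero_mem_iterSum h0 _⟩ hne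
    rw [add_one_mul, ← add_assoc]
    exact (Nat.add_le_add_right ih _).trans hstep

theorem two_mul_ncard_add_mul_connectivity_le (h0 : (0 : G) ∈ T) {n : ℕ}
    (hne : iterSum T (n + 2) ≠ univ) : 2 * T.ncard + n * connectivity T ≤ Nat.card G := by
  have hne' : iterSum T (n + 1) ≠ univ := fun h =>
    hne (univ_subset_iff.1 (h ▸ iterSum_mono h0 (Nat.le_succ _)))
  have hgrowth := ncard_add_mul_connectivity_le_ncard_iterSum h0 hne'
  have hpigeon := ncard_add_ncard_le_of_add_ne_univ hne
  omega

theorem exists_addSubgroup_isFragment_union_subset (h0 : (0 : G) ∈ T)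
    (hspan : AddSubgroup.closure T = ⊤) (hT : T ≠ univ) :
    ∃ (H : AddSubgroup G) (g : G), g ∉ H ∧ IsFragment T H ∧ (H : Set G) ∪ ({g} + H) ⊆ H + T := by
  obtain ⟨H, hH, -⟩ := exists_addSubgroup_isAtom h0 hT
  obtain ⟨g, hgT, hgH⟩ : ∃ g ∈ T, g ∉ H := by
    by_contra! hTH
    have hH' : H = ⊤ := top_le_iff.1 (hspan ▸ (AddSubgroup.closure_le H).2 hTH)
    exact hH.2.1 (univ_subset_iff.1 (hH' ▸ subset_add_left _ h0))
  refine ⟨H, g, hgH, hH, union_subset (subset_add_left _ h0) ?_⟩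
  rw [add_comm]
  exact add_subset_add_left (singleton_subset_iff.2 hgT)

theorem ncard_le_two_mul_connectivity (h0 : (0 : G) ∈ T)
    (hspan : AddSubgroup.closure T = ⊤) (hT : T ≠ univ) : T.ncard ≤ 2 * connectivity T := by
  obtain ⟨H, g, hg, hH, hsub⟩ := exists_addSubgroup_isFragment_union_subset h0 hspan hT
  have hU : 2 * Nat.card H ≤ ((H : Set G) + T).ncard :=
    ncard_union_singleton_add H g hg ▸ ncard_le_ncard hsub
  have hT := ncard_le_ncard (subset_add_right T (zero_mem H))
  have hHT := hH.2.2
  have hH : (H : Set G).ncard = Nat.card H := Nat.card_coe_set_eq _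
  omega

theorem exists_eq_union_of_ncard_eq_two_mul_connectivity (h0 : (0 : G) ∈ T)
    (hspan : AddSubgroup.closure T = ⊤) (hT : T ≠ univ) (heq : T.ncard = 2 * connectivity T) :
    ∃ (H : AddSubgroup G) (g : G), g ∉ H ∧ T = (H : Set G) ∪ ({g} + H) := by
  obtain ⟨H, g, hg, hH, hsub⟩ := exists_addSubgroup_isFragment_union_subset h0 hspan hT
  have hU := ncard_union_singleton_add H g hg
  have hTH : T ⊆ H + T := subset_add_right T (zero_mem H)
  have hUle := ncard_le_ncard hsub
  have hTle := ncard_le_ncard hTH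
  have hHT := hH.2.2
  have hH : (H : Set G).ncard = Nat.card H := Nat.card_coe_set_eq _
  refine ⟨H, g, hg, ?_⟩
  rw [eq_of_subset_of_ncard_le hTH (by omega), eq_of_subset_of_ncard_le hsub (by omega)]

end Isoperimetric

section SumsetBounds

open Isoperimetric

variable [AddCommGroup G] [Finite G] {T : Set G} {ρ : ℕ}

theorem mul_ncard_le_of_iterSum_ne_univ (h0 : (0 : G) ∈ T) (hspan : AddSubgroup.closure T = ⊤)
    (hρ : 3 ≤ ρ) (hne : iterSum T (ρ - 1) ≠ univ) : (ρ + 1) * T.ncard ≤ 2 * Nat.card G := by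
  obtain ⟨n, rfl⟩ : ∃ n, ρ = n + 3 := ⟨ρ - 3, by omega⟩
  have hTκ := ncard_le_two_mul_connectivity h0 hspan (ne_univ_of_iterSum_ne_univ h0 (by omega) hne)
  have hcount := two_mul_ncard_add_mul_connectivity_le h0 hne
  nlinarith

theorem exists_eq_union_of_mul_ncard_eq (h0 : (0 : G) ∈ T) (hspan : AddSubgroup.closure T = ⊤)
    (hρ : 4 ≤ ρ) (hne : iterSum T (ρ - 1) ≠ univ) (heq : (ρ + 1) * T.ncard = 2 * Nat.card G) :
    ∃ (H : AddSubgroup G) (g : G), g ∉ H ∧ T = (H : Set G) ∪ ({g} + H) := by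
  obtain ⟨n, rfl⟩ : ∃ n, ρ = n + 4 := ⟨ρ - 4, by omega⟩
  have hT := ne_univ_of_iterSum_ne_univ h0 (by omega) hne
  have hTκ := ncard_le_two_mul_connectivity h0 hspan hT
  have hcount := two_mul_ncard_add_mul_connectivity_le (n := n + 1) h0 hne
  refine exists_eq_union_of_ncard_eq_two_mul_connectivity h0 hspan hT ?_
  nlinarith

theorem exists_iterSum_eq_univ (h0 : (0 : G) ∈ T) (hspan : AddSubgroup.closure T = ⊤) :
    ∃ n, iterSum T n = univ := by
  by_contra! hne
  have hT := ne_univ_of_iterSum_ne_univ h0 one_ne_zero (hne 1)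
  have hTκ := ncard_le_two_mul_connectivity h0 hspan hT
  have hTpos := (ncard_pos (toFinite T)).2 ⟨0, h0⟩
  have hcount := two_mul_ncard_add_mul_connectivity_le h0 (hne (Nat.card G + 2))
  have := Nat.le_mul_of_pos_right (Nat.card G) (show 0 < connectivity T by omega)
  omega

theorem le_diamPlus_iff {A : Set G} (hA : Spans A) (hρ : ρ ≠ 0) :
    ρ ≤ diamPlus A ↔ iterSum (insert 0 A) (ρ - 1) ≠ univ := by
  refine ⟨fun hle h => ?_, fun hne => ?_⟩
  · have : diamPlus A ≤ ρ - 1 := Nat.sInf_le h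
    omega
  · by_contra! hlt
    have hspan : AddSubgroup.closure (insert 0 A) = ⊤ := by
      rwa [AddSubgroup.closure_insert_zero]
    have huniv : iterSum (insert 0 A) (diamPlus A) = univ :=
      Nat.sInf_mem (exists_iterSum_eq_univ (mem_insert 0 A) hspan)
    exact hne (univ_subset_iff.1 (huniv ▸ iterSum_mono (mem_insert 0 A) (by omega)))

end SumsetBounds

theorem stmt17 (G : Type*) [AddCommGroup G] [Finite G] (ρ : ℕ) (hρ : 4 ≤ ρ) :
    (∀ A : Set G, Spans A → ρ ≤ diamPlus A → (ρ + 1) * A.ncard ≤ 2 * Nat.card G) ∧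
      ∀ A : Set G,
        (Spans A ∧ ρ ≤ diamPlus A ∧ (ρ + 1) * A.ncard = 2 * Nat.card G) ↔
          ∃ (H : AddSubgroup G) (g : G),
            A = (H : Set G) ∪ ({g} + (H : Set G)) ∧
            Nat.card (G ⧸ H) = ρ + 1 ∧
            AddSubgroup.closure {((g : G ⧸ H))} = ⊤ := by
  have hρ0 : ρ ≠ 0 := by omega
  have hbound (A : Set G) (hA : Spans A) (hd : ρ ≤ diamPlus A) :
      (ρ + 1) * (insert 0 A).ncard ≤ 2 * Nat.card G :=
    mul_ncard_le_of_iterSum_ne_univ (mem_insert 0 A) (by rwa [AddSubgroup.closure_insert_zero])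
      (by omega) ((le_diamPlus_iff hA hρ0).1 hd)
  refine ⟨fun A hA hd => (Nat.mul_le_mul_left _ (ncard_le_ncard (subset_insert 0 A))).trans
    (hbound A hA hd), fun A => ⟨?_, ?_⟩⟩
  · rintro ⟨hA, hd, heq⟩
    have hA0 : insert 0 A = A := (eq_of_subset_of_ncard_le (subset_insert 0 A)
      (Nat.le_of_mul_le_mul_left (heq ▸ hbound A hA hd) (by omega))).symm
    have hne := (le_diamPlus_iff hA hρ0).1 hd
    rw [hA0] at hne
    obtain ⟨H, g, hg, rfl⟩ := exists_eq_union_of_mul_ncard_eq (hA0 ▸ mem_insert 0 A) hA hρ hne heq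
    exact ⟨H, g, rfl, (mul_ncard_union_singleton_add_eq_iff H g hg _).1 heq,
      (spans_union_singleton_add_iff H g).1 hA⟩
  · rintro ⟨H, g, rfl, hcard, hgen⟩
    have hA := (spans_union_singleton_add_iff H g).2 hgen
    refine ⟨hA, (le_diamPlus_iff hA hρ0).2 ?_, (mul_ncard_union_singleton_add_eq_iff H g
      (notMem_of_closure_singleton_eq_top H g hgen (by omega)) _).2 hcard⟩
    rw [insert_eq_of_mem (mem_union_left _ (zero_mem H))]
    exact iterSum_union_singleton_add_ne_univ H g (by omega)
end
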